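/- For every minimal Besicovitch arrangement B in 𝔽_q², one has 3·x_0^B − x_2^B ≤ q² − 2q (equivalently, 3·x_0^B ≤ q² − 2q + x_2^B). -/

import Mathlib

/-! Each of the `q + 1` lines has `q` points and any two of them meet in exactly one point,
so double counting gives `∑_P m_P = q(q+1)` and `∑_P m_P(m_P - 1) = q(q+1)`, whence
`∑_P (m_P - 1)(m_P - 3) = q² - 2q`. The summand is `3` at multiplicity `0`, `-1` at
multiplicity `2`, and nonnegative at every other multiplicity. -/

open Finset

/-- `memLine s c P` says that the point `P ∈ 𝔽_q²` lies on the line `l(s, c)`: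
for `s = some m` (slope `m ∈ 𝔽_q`) this is the line `y = m·x + c`,
and for `s = none` (slope `∞`) this is the vertical line `x = c`. -/
def memLine {F : Type*} [Field F] (s : Option F) (c : F) (P : F × F) : Prop :=
  match s with
  | none => P.1 = c
  | some m => P.2 = m * P.1 + c

instance {F : Type*} [Field F] [DecidableEq F] :
    ∀ (s : Option F) (c : F) (P : F × F), Decidable (memLine s c P)
  | none, c, P => inferInstanceAs (Decidable (P.1 = c))
  | some m, c, P => inferInstanceAs (Decidable (P.2 = m * P.1 + c))

/-- The multiplicity of the point `P` in the minimal Besicovitch arrangement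
`B = ⋃_{i ∈ 𝔽_q ∪ {∞}} l(i, b i)` determined by `b : 𝔽_q ∪ {∞} → 𝔽_q`,
i.e. the number of slopes `i` with `P ∈ l(i, b i)`. -/
def multPt {F : Type*} [Field F] [Fintype F] [DecidableEq F]
    (b : Option F → F) (P : F × F) : ℕ :=
  (Finset.univ.filter fun i : Option F => memLine i (b i) P).card

/-- `xCount b m` is `x_m^B`: the number of points of `𝔽_q²` of multiplicity
exactly `m` in the minimal Besicovitch arrangement determined by `b`. -/
def xCount {F : Type*} [Field F] [Fintype F] [DecidableEq F]
    (b : Option F → F) (m : ℕ) : ℕ :=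
  (Finset.univ.filter fun P : F × F => multPt b P = m).card

section Arrangement
variable {F : Type*} [Field F] [Fintype F] [DecidableEq F]

lemma card_filter_memLine (s : Option F) (c : F) :
    #{P : F × F | memLine s c P} = Fintype.card F := by
  cases s with
  | none =>
    have : ({P : F × F | memLine none c P} : Finset _) = univ.image (fun y => (c, y)) := by
      ext ⟨x, y⟩; rw [mem_filter]; simp [memLine, eq_comm]
    rw [this, card_image_of_injective _ fun y y' h => (Prod.ext_iff.mp h).2, card_univ]
  | some m =>
    have : ({P : F × F | memLine (some m) c P} : Finset _) =
        univ.image (fun x => (x, m * x + c)) := by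
      ext ⟨x, y⟩; rw [mem_filter]; simp [memLine, eq_comm]
    rw [this, card_image_of_injective _ fun x x' h => (Prod.ext_iff.mp h).1, card_univ]

lemma card_filter_memLine_and_memLine {s t : Option F} (hst : s ≠ t) (c d : F) :
    #{P : F × F | memLine s c P ∧ memLine t d P} = 1 := by
  rw [card_eq_one]
  match s, t with
  | none, none => exact absurd rfl hst
  | none, some m =>
    exact ⟨(c, m * c + d), by ext ⟨x, y⟩; rw [mem_filter]; simp +contextual [memLine]⟩
  | some m, none =>
    exact ⟨(d, m * d + c), by ext ⟨x, y⟩; rw [mem_filter]; simp +contextual [memLine, and_comm]⟩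
  | some m, some n =>
    have hmn : m - n ≠ 0 := sub_ne_zero.mpr fun h => hst (h ▸ rfl)
    refine ⟨((d - c) / (m - n), m * ((d - c) / (m - n)) + c), ?_⟩
    ext ⟨x, y⟩
    rw [mem_filter, mem_singleton]
    simp only [mem_univ, true_and, memLine, Prod.mk.injEq]
    constructor
    · rintro ⟨rfl, h⟩
      have hx : x = (d - c) / (m - n) := by field_simp; linear_combination h
      exact ⟨hx, hx ▸ rfl⟩
    · rintro ⟨rfl, rfl⟩
      exact ⟨rfl, by field_simp; ring⟩

lemma sum_multPt (b : Option F → F) :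
    ∑ P, multPt b P = (Fintype.card F + 1) * Fintype.card F := by
  have incidences := sum_card_bipartiteAbove_eq_sum_card_bipartiteBelow
    (s := univ) (t := univ) (r := fun i P => memLine i (b i) P)
  simp only [bipartiteAbove, card_filter_memLine, sum_const, card_univ,
    Fintype.card_option, smul_eq_mul] at incidences
  exact incidences.symm

lemma sum_multPt_mul_self_sub (b : Option F → F) :
    ∑ P, (multPt b P * multPt b P - multPt b P) = (Fintype.card F + 1) * Fintype.card F := by
  -- double count triples `(i, j, P)` with `i ≠ j` and `P` on both lines
  have incidences := sum_card_bipartiteAbove_eq_sum_card_bipartiteBelow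
    (s := (univ : Finset (Option F)).offDiag) (t := univ)
    (r := fun ij P => memLine ij.1 (b ij.1) P ∧ memLine ij.2 (b ij.2) P)
  have below (P : F × F) : (univ.offDiag.bipartiteBelow
      (fun ij P => memLine ij.1 (b ij.1) P ∧ memLine ij.2 (b ij.2) P) P) =
      (univ.filter fun i => memLine i (b i) P).offDiag := by
    ext ⟨i, j⟩
    simp only [bipartiteBelow, mem_filter, mem_offDiag, mem_univ, true_and]
    tauto
  have above : ∀ ij ∈ (univ : Finset (Option F)).offDiag, #(univ.bipartiteAbove
      (fun ij P => memLine ij.1 (b ij.1) P ∧ memLine ij.2 (b ij.2) P) ij) = 1 :=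
    fun ij hij => card_filter_memLine_and_memLine (mem_offDiag.mp hij).2.2 _ _
  rw [sum_congr rfl above] at incidences
  simp only [below, offDiag_card, sum_const, card_univ, Fintype.card_option, smul_eq_mul,
    mul_one] at incidences
  rw [← Nat.mul_sub_one, Nat.add_sub_cancel] at incidences
  exact incidences.symm

lemma sum_multPt_sq (b : Option F → F) :
    ∑ P, multPt b P ^ 2 = 2 * ((Fintype.card F + 1) * Fintype.card F) := by
  have split (m : ℕ) : m ^ 2 = (m * m - m) + m := by
    rw [sq, Nat.sub_add_cancel (Nat.le_mul_self m)]
  simp only [split, sum_add_distrib, sum_multPt_mul_self_sub, sum_multPt]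
  ring

lemma sum_multPt_sub_one_mul_sub_three (b : Option F → F) :
    ∑ P, ((multPt b P : ℤ) - 1) * (multPt b P - 3) =
      (Fintype.card F : ℤ) ^ 2 - 2 * Fintype.card F := by
  have expand (m : ℤ) : (m - 1) * (m - 3) = m ^ 2 - 4 * m + 3 := by ring
  have second := congrArg (Nat.cast (R := ℤ)) (sum_multPt_sq b)
  have first := congrArg (Nat.cast (R := ℤ)) (sum_multPt b)
  push_cast at second first
  simp only [expand, sum_add_distrib, sum_sub_distrib, ← mul_sum, second, first, sum_const,
    card_univ, Fintype.card_prod, nsmul_eq_mul]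
  push_cast
  ring

end Arrangement

lemma three_mul_ite_sub_ite_le_sub_one_mul_sub_three (m : ℕ) :
    3 * (if m = 0 then 1 else 0 : ℤ) - (if m = 2 then 1 else 0) ≤ ((m : ℤ) - 1) * (m - 3) := by
  rcases m with _ | _ | _ | m
  · norm_num
  · norm_num
  · norm_num
  · simp only [Nat.add_eq_zero_iff, one_ne_zero, and_false, if_false]
    push_cast
    nlinarith

/-- For every minimal Besicovitch arrangement `B` in `𝔽_q²`,
`3·x_0^B − x_2^B ≤ q² − 2q`. -/
theorem stmt12 {F : Type*} [Field F] [Fintype F] [DecidableEq F]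
    (q : ℕ) (hq : Fintype.card F = q) (b : Option F → F) :
    3 * (xCount b 0 : ℤ) - xCount b 2 ≤ (q : ℤ) ^ 2 - 2 * q := by
  subst hq
  calc 3 * (xCount b 0 : ℤ) - xCount b 2
      = ∑ P, (3 * (if multPt b P = 0 then 1 else 0 : ℤ) - if multPt b P = 2 then 1 else 0) := by
        simp only [xCount, natCast_card_filter, mul_sum, sum_sub_distrib]
    _ ≤ ∑ P, ((multPt b P : ℤ) - 1) * (multPt b P - 3) :=
        sum_le_sum fun P _ => three_mul_ite_sub_ite_le_sub_one_mul_sub_three _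
    _ = (Fintype.card F : ℤ) ^ 2 - 2 * Fintype.card F := sum_multPt_sub_one_mul_sub_three b
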